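/- arXiv:2506.05956 — 4 statements merged into one kernel-verified Lean document; each statement's English description precedes it below -/
import Mathlib

section
/- Let (S, τ) be a topological semigroup. Then the following are equivalent: (a) S is a cryptogroup, each ℋ-class with the induced multiplication and the subspace topology is a topological group, and the collection of all subsets of S that are open in some ℋ-class (with its subspace topology) forms a base for τ; (b) S is a topological cryptogroup and for each x ∈ S and each open set G containing x there exists an open set U in S with x ∈ U ⊆ G ∩ H_x, where H_x is the ℋ-class of x. -/
open Set TopologicalSpace

/-- The principal left ideal (with `a` adjoined) generated by `a`: `{a} ∪ {s*a : s ∈ S}`. -/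
def leftIdeal {S : Type*} [Semigroup S] (a : S) : Set S :=
  insert a {x | ∃ s, x = s * a}

/-- The principal right ideal (with `a` adjoined) generated by `a`: `{a} ∪ {a*s : s ∈ S}`. -/
def rightIdeal {S : Type*} [Semigroup S] (a : S) : Set S :=
  insert a {x | ∃ s, x = a * s}

/-- Green's relation ℋ on a semigroup. -/
def greenH {S : Type*} [Semigroup S] (a b : S) : Prop :=
  leftIdeal a = leftIdeal b ∧ rightIdeal a = rightIdeal b

/-- The ℋ-class of an element. -/
def HClass {S : Type*} [Semigroup S] (x : S) : Set S := {y | greenH y x}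

/-- A semigroup is completely regular if every element is completely regular. -/
def CompletelyRegularSemigroup (S : Type*) [Semigroup S] : Prop :=
  ∀ a : S, ∃ x, a = a * x * a ∧ a * x = x * a

/-- Green's relation ℋ is a congruence. -/
def HIsCongruence (S : Type*) [Semigroup S] : Prop :=
  ∀ a b c : S, greenH a b → greenH (a * c) (b * c) ∧ greenH (c * a) (c * b)

/-- A cryptogroup is a completely regular semigroup in which ℋ is a congruence. -/
def IsCryptogroup (S : Type*) [Semigroup S] : Prop :=
  CompletelyRegularSemigroup S ∧ HIsCongruence S

/-- In a cryptogroup every ℋ-class is a group; `idp x` (written `x⁰`) is the identity of the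
ℋ-class of `x`, and `inv x` (written `x⁻¹`) is the inverse of `x` inside its ℋ-class. -/
structure CryptoOps (S : Type*) [Semigroup S] where
  idp : S → S
  inv : S → S
  idp_mem : ∀ x, greenH (idp x) x
  idp_mul : ∀ x y, greenH y x → idp x * y = y
  mul_idp : ∀ x y, greenH y x → y * idp x = y
  inv_mem : ∀ x, greenH (inv x) x
  mul_inv : ∀ x, x * inv x = idp x
  inv_mul : ∀ x, inv x * x = idp x

/-- The set `E(S)` of idempotents of a semigroup. -/
def idemSet (S : Type*) [Semigroup S] : Set S := {e | e * e = e}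

/-- `(xU)* = {y ∈ S : x⁻¹*y ∈ U and x⁰ = y⁰}`. -/
def lstar {S : Type*} [Semigroup S] (ops : CryptoOps S) (x : S) (U : Set S) : Set S :=
  {y | ops.inv x * y ∈ U ∧ ops.idp x = ops.idp y}

/-- `(Ux)* = {y ∈ S : y*x⁻¹ ∈ U and x⁰ = y⁰}`. -/
def rstar {S : Type*} [Semigroup S] (ops : CryptoOps S) (U : Set S) (x : S) : Set S :=
  {y | y * ops.inv x ∈ U ∧ ops.idp x = ops.idp y}

/-- `(AB)* = ⋃_{a ∈ A} (aB)*`. -/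
def setStar {S : Type*} [Semigroup S] (ops : CryptoOps S) (A B : Set S) : Set S :=
  ⋃ a ∈ A, lstar ops a B

/-- A full subcryptogroup: contains all idempotents, and closed under multiplication
and inversion. -/
def IsFullSubcryptogroup {S : Type*} [Semigroup S] (ops : CryptoOps S) (K : Set S) : Prop :=
  idemSet S ⊆ K ∧ (∀ x ∈ K, ∀ y ∈ K, x * y ∈ K) ∧ (∀ x ∈ K, ops.inv x ∈ K)

/-!
Both conditions on the topology say that every ℋ-class is open: the sets `V ∩ H_x` form a base
exactly when the classes are open, and so does the neighbourhood condition of (b). The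
ℋ-classes then form an open cover, on which continuity of inversion class by class is the same as
continuity on `S`. Closure of the ℋ-classes under multiplication comes from ℋ being a congruence
together with `x² ℋ x` in a completely regular semigroup.
-/

section Partition

variable {X : Type*} [TopologicalSpace X] {C : X → Set X}

theorem isTopologicalBasis_inter_iff_forall_isOpen (hmem : ∀ x, x ∈ C x) :
    IsTopologicalBasis {U : Set X | ∃ x : X, ∃ V : Set X, IsOpen V ∧ U = V ∩ C x} ↔
      ∀ x, IsOpen (C x) := by
  constructor
  · intro hB x
    simpa using hB.isOpen ⟨x, univ, isOpen_univ, (univ_inter _).symm⟩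
  · intro hC
    refine isTopologicalBasis_of_isOpen_of_nhds ?_ ?_
    · rintro _ ⟨x, V, hV, rfl⟩
      exact hV.inter (hC x)
    · intro a u hau hu
      exact ⟨u ∩ C a, ⟨a, u, hu, rfl⟩, ⟨hau, hmem a⟩, inter_subset_left⟩

theorem exists_isOpen_subset_inter_iff_forall_isOpen (hmem : ∀ x, x ∈ C x)
    (hC : ∀ x, ∀ y ∈ C x, C y = C x) :
    (∀ x : X, ∀ G : Set X, IsOpen G → x ∈ G →
        ∃ U : Set X, IsOpen U ∧ x ∈ U ∧ U ⊆ G ∩ C x) ↔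
      ∀ x, IsOpen (C x) := by
  constructor
  · intro h x
    refine isOpen_iff_forall_mem_open.2 fun y hy => ?_
    obtain ⟨U, hU, hyU, hUC⟩ := h y univ isOpen_univ (mem_univ y)
    exact ⟨U, fun z hz => hC x y hy ▸ (hUC hz).2, hU, hyU⟩
  · intro hopen x G hG hx
    exact ⟨G ∩ C x, hG.inter (hopen x), ⟨hx, hmem x⟩, subset_rfl⟩

end Partition

section GreenH

variable {S : Type*} [Semigroup S]

theorem greenH.symm {a b : S} (h : greenH a b) : greenH b a := ⟨h.1.symm, h.2.symm⟩

theorem greenH.trans {a b c : S} (h₁ : greenH a b) (h₂ : greenH b c) : greenH a c :=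
  ⟨h₁.1.trans h₂.1, h₁.2.trans h₂.2⟩

theorem mem_HClass_self (x : S) : x ∈ HClass x := ⟨rfl, rfl⟩

theorem HClass_eq_of_mem {x y : S} (h : y ∈ HClass x) : HClass y = HClass x := by
  ext z
  exact ⟨fun hz => hz.trans h, fun hz => hz.trans h.symm⟩

theorem leftIdeal_subset_of_eq_mul {a b s : S} (h : a = s * b) : leftIdeal a ⊆ leftIdeal b := by
  rintro _ (rfl | ⟨u, rfl⟩)
  · exact Or.inr ⟨s, h⟩
  · exact Or.inr ⟨u * s, by rw [h, mul_assoc]⟩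

theorem rightIdeal_subset_of_eq_mul {a b s : S} (h : a = b * s) :
    rightIdeal a ⊆ rightIdeal b := by
  rintro _ (rfl | ⟨u, rfl⟩)
  · exact Or.inr ⟨s, h⟩
  · exact Or.inr ⟨s * u, by rw [h, mul_assoc]⟩

theorem greenH_mul_self (hS : CompletelyRegularSemigroup S) (x : S) : greenH (x * x) x := by
  obtain ⟨a, hxa, hcomm⟩ := hS x
  have hleft : x = a * (x * x) := by rw [← mul_assoc, ← hcomm, ← hxa]
  have hright : x = x * x * a := by rw [mul_assoc, hcomm, ← mul_assoc, ← hxa]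
  exact ⟨(leftIdeal_subset_of_eq_mul rfl).antisymm (leftIdeal_subset_of_eq_mul hleft),
    (rightIdeal_subset_of_eq_mul rfl).antisymm (rightIdeal_subset_of_eq_mul hright)⟩

theorem mul_mem_HClass (hS : IsCryptogroup S) {x y z : S} (hy : y ∈ HClass x)
    (hz : z ∈ HClass x) : y * z ∈ HClass x :=
  ((hS.2 y x z hy).1.trans (hS.2 z x x hz).2).trans (greenH_mul_self hS.1 x)

end GreenH

theorem stmt1_general {S : Type*} [Semigroup S] [TopologicalSpace S]
    (ops : CryptoOps S) :
    (IsCryptogroup S ∧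
      (∀ x : S, ∀ y ∈ HClass x, ∀ z ∈ HClass x, y * z ∈ HClass x) ∧
      (∀ x : S, ∀ y ∈ HClass x, ops.inv y ∈ HClass x) ∧
      (∀ x : S, ContinuousOn ops.inv (HClass x)) ∧
      TopologicalSpace.IsTopologicalBasis
        {U : Set S | ∃ x : S, ∃ V : Set S, IsOpen V ∧ U = V ∩ HClass x}) ↔
    (IsCryptogroup S ∧ Continuous ops.inv ∧
      ∀ x : S, ∀ G : Set S, IsOpen G → x ∈ G →
        ∃ U : Set S, IsOpen U ∧ x ∈ U ∧ U ⊆ G ∩ HClass x) := by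
  rw [isTopologicalBasis_inter_iff_forall_isOpen mem_HClass_self,
    exists_isOpen_subset_inter_iff_forall_isOpen mem_HClass_self fun _ _ => HClass_eq_of_mem]
  constructor
  · rintro ⟨hS, -, -, hinv, hopen⟩
    exact ⟨hS, continuous_of_cover_nhds (fun x => ⟨x, (hopen x).mem_nhds (mem_HClass_self x)⟩)
      hinv, hopen⟩
  · rintro ⟨hS, hinv, hopen⟩
    exact ⟨hS, fun _ _ hy _ hz => mul_mem_HClass hS hy hz, fun _ y hy => (ops.inv_mem y).trans hy,
      fun _ => hinv.continuousOn, hopen⟩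

/-- A topological semigroup `S` is a band of topological groups (i.e. `S` is a cryptogroup,
each ℋ-class with the induced multiplication and subspace topology is a topological group,
and the sets open in some ℋ-class form a base for the topology) iff `S` is a topological
cryptogroup such that for each `x` and each open `G ∋ x` there is an open `U` with
`x ∈ U ⊆ G ∩ H_x`. -/
theorem stmt1 {S : Type*} [Semigroup S] [TopologicalSpace S] [ContinuousMul S]
    (ops : CryptoOps S) :
    (IsCryptogroup S ∧
      (∀ x : S, ∀ y ∈ HClass x, ∀ z ∈ HClass x, y * z ∈ HClass x) ∧
      (∀ x : S, ∀ y ∈ HClass x, ops.inv y ∈ HClass x) ∧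
      (∀ x : S, ContinuousOn ops.inv (HClass x)) ∧
      TopologicalSpace.IsTopologicalBasis
        {U : Set S | ∃ x : S, ∃ V : Set S, IsOpen V ∧ U = V ∩ HClass x}) ↔
    (IsCryptogroup S ∧ Continuous ops.inv ∧
      ∀ x : S, ∀ G : Set S, IsOpen G → x ∈ G →
        ∃ U : Set S, IsOpen U ∧ x ∈ U ∧ U ⊆ G ∩ HClass x) :=
  stmt1_general ops
end

section
/- Let S and T be bands of topological groups and let f : S → T be a semigroup homomorphism (f(x*y) = f(x)*f(y) for all x, y ∈ S). If f is continuous at each idempotent element of S, then f is continuous on all of S. -/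
open Set TopologicalSpace

/-!
On the ℋ-class of `a`, which is open, a homomorphism satisfies `f x = f a * f (a⁻¹ * x)`.
The right-hand side is continuous at `a` as soon as `f` is continuous at `a⁻¹ * a = a⁰`,
an idempotent.
-/

namespace CryptoOps

variable {S : Type*} [Semigroup S] (ops : CryptoOps S)

theorem idp_mul_idp (x : S) : ops.idp x * ops.idp x = ops.idp x :=
  ops.idp_mul x _ (ops.idp_mem x)

theorem mul_inv_mul_cancel_left {x y : S} (h : greenH y x) : x * (ops.inv x * y) = y := by
  rw [← mul_assoc, ops.mul_inv, ops.idp_mul x y h]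

theorem continuousAt_of_continuousAt_idp [TopologicalSpace S] [ContinuousMul S]
    {T : Type*} [Semigroup T] [TopologicalSpace T] [ContinuousMul T]
    {f : S → T} (hf : ∀ x y : S, f (x * y) = f x * f y) {a : S} (ha : IsOpen (HClass a))
    (hfa : ContinuousAt f (ops.idp a)) : ContinuousAt f a := by
  have h_translate : ContinuousAt (fun x => f a * f (ops.inv a * x)) a := by
    have hfa' : ContinuousAt f (ops.inv a * a) := by rwa [ops.inv_mul]
    exact continuousAt_const.mul (hfa'.comp (continuous_const_mul _).continuousAt)
  refine h_translate.congr (Filter.eventuallyEq_of_mem (ha.mem_nhds ⟨rfl, rfl⟩) ?_)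
  intro x hx
  dsimp only
  rw [← hf, ops.mul_inv_mul_cancel_left hx]

end CryptoOps

theorem stmt7_general {S T : Type*} [Semigroup S] [TopologicalSpace S] [ContinuousMul S]
    [Semigroup T] [TopologicalSpace T] [ContinuousMul T]
    (opsS : CryptoOps S) (hoS : ∀ x : S, IsOpen (HClass x))
    (f : S → T) (hf : ∀ x y : S, f (x * y) = f x * f y)
    (hcont : ∀ e : S, e * e = e → ContinuousAt f e) :
    Continuous f :=
  continuous_iff_continuousAt.2 fun a =>
    opsS.continuousAt_of_continuousAt_idp hf (hoS a) (hcont _ (opsS.idp_mul_idp a))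

/-- A semigroup homomorphism between bands of topological groups which is continuous at
every idempotent is continuous. -/
theorem stmt7 {S T : Type*} [Semigroup S] [TopologicalSpace S] [ContinuousMul S]
    [Semigroup T] [TopologicalSpace T] [ContinuousMul T]
    (opsS : CryptoOps S) (hcS : IsCryptogroup S)
    (hiS : Continuous opsS.inv) (hoS : ∀ x : S, IsOpen (HClass x))
    (opsT : CryptoOps T) (hcT : IsCryptogroup T)
    (hiT : Continuous opsT.inv) (hoT : ∀ x : T, IsOpen (HClass x))
    (f : S → T) (hf : ∀ x y : S, f (x * y) = f x * f y)
    (hcont : ∀ e : S, e * e = e → ContinuousAt f e) :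
    Continuous f :=
  stmt7_general opsS hoS f hf hcont
end

section
/- A band of topological groups S is metrizable if and only if each ℋ-class of S, with the subspace topology, is metrizable. -/
open Set TopologicalSpace

/-! Since ℋ is an equivalence relation whose classes are open, `S` is homeomorphic to the
topological sum of its ℋ-classes, and a topological sum of metrizable spaces is metrizable. -/

instance TopologicalSpace.MetrizableSpace.sigma {ι : Type*} {E : ι → Type*}
    [∀ i, TopologicalSpace (E i)] [∀ i, MetrizableSpace (E i)] : MetrizableSpace (Σ i, E i) :=
  letI := fun i ↦ metrizableSpaceMetric (E i)
  letI : MetricSpace (Σ i, E i) := Metric.Sigma.metricSpace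
  inferInstance

theorem TopologicalSpace.metrizableSpace_of_isOpen_fiber {X ι : Type*} [TopologicalSpace X]
    (π : X → ι) (hopen : ∀ i, IsOpen {x | π x = i})
    (hmetr : ∀ i, MetrizableSpace {x // π x = i}) :
    MetrizableSpace X :=
  let e : (Σ i, {x // π x = i}) ≃ₜ X :=
    (Equiv.sigmaFiberEquiv π).toHomeomorphOfContinuousOpen
      (continuous_sigma fun _ ↦ continuous_subtype_val)
      (isOpenMap_sigma.2 fun i ↦ (hopen i).isOpenMap_subtype_val)
  e.symm.isEmbedding.metrizableSpace

theorem Setoid.metrizableSpace_of_isOpen_classes {X : Type*} [TopologicalSpace X] (r : Setoid X)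
    (hopen : ∀ x, IsOpen {y | r y x}) (hmetr : ∀ x, MetrizableSpace {y | r y x}) :
    MetrizableSpace X := by
  have hfiber (x : X) : {y | Quotient.mk r y = Quotient.mk r x} = {y | r y x} :=
    Set.ext fun _ ↦ Quotient.eq
  refine metrizableSpace_of_isOpen_fiber (Quotient.mk r) (Quotient.ind fun x ↦ ?_)
    (Quotient.ind fun x ↦ ?_)
  · rw [hfiber]
    exact hopen x
  · change MetrizableSpace {y | Quotient.mk r y = Quotient.mk r x}
    rw [hfiber]
    exact hmetr x

def greenHSetoid (S : Type*) [Semigroup S] : Setoid S where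
  r := greenH
  iseqv :=
    ⟨fun _ ↦ ⟨rfl, rfl⟩, fun h ↦ ⟨h.1.symm, h.2.symm⟩,
      fun h h' ↦ ⟨h.1.trans h'.1, h.2.trans h'.2⟩⟩

theorem stmt15_general {S : Type*} [Semigroup S] [TopologicalSpace S]
    (hopen : ∀ x : S, IsOpen (HClass x)) :
    TopologicalSpace.MetrizableSpace S ↔
      ∀ x : S, TopologicalSpace.MetrizableSpace (HClass x) :=
  ⟨fun _ _ ↦ inferInstance, (greenHSetoid S).metrizableSpace_of_isOpen_classes hopen⟩

/-- A band of topological groups is metrizable iff each ℋ-class is metrizable. -/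
theorem stmt15 {S : Type*} [Semigroup S] [TopologicalSpace S] [ContinuousMul S]
    (ops : CryptoOps S) (hcrypt : IsCryptogroup S)
    (hinv : Continuous ops.inv) (hopen : ∀ x : S, IsOpen (HClass x)) :
    TopologicalSpace.MetrizableSpace S ↔
      ∀ x : S, TopologicalSpace.MetrizableSpace (HClass x) :=
  stmt15_general hopen
end

section
/- Every full subcryptogroup K of a band of topological groups S that is open as a subset of S is also closed in S. -/
open Set TopologicalSpace

/-!
The argument that an open subgroup of a topological group is closed, carried out inside the
ℋ-classes: for `x ∉ K`, the set of `y ∈ H_x` with `x * y⁻¹ ∈ K` is an open neighbourhood of `x`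
(it contains `x` because `x * x⁻¹ = x⁰` is idempotent), and it misses `K`, since
`y ∈ K` would give `x = (x * y⁻¹) * y ∈ K`.
-/

theorem greenH_symm {S : Type*} [Semigroup S] {a b : S} (h : greenH a b) : greenH b a :=
  ⟨h.1.symm, h.2.symm⟩

namespace CryptoOps

variable {S : Type*} [Semigroup S] (ops : CryptoOps S)

theorem idp_mem_idemSet (x : S) : ops.idp x ∈ idemSet S :=
  ops.idp_mul x (ops.idp x) (ops.idp_mem x)

theorem mul_inv_mul_cancel {x y : S} (h : greenH y x) : x * ops.inv y * y = x := by
  rw [mul_assoc, ops.inv_mul y, ops.mul_idp y x (greenH_symm h)]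

end CryptoOps

namespace IsFullSubcryptogroup

variable {S : Type*} [Semigroup S] {ops : CryptoOps S} {K : Set S}

theorem mul_inv_self_mem (hK : IsFullSubcryptogroup ops K) (x : S) : x * ops.inv x ∈ K := by
  rw [ops.mul_inv x]
  exact hK.1 (ops.idp_mem_idemSet x)

theorem mem_of_mul_inv_mem (hK : IsFullSubcryptogroup ops K) {x y : S} (hyx : greenH y x)
    (hy : y ∈ K) (h : x * ops.inv y ∈ K) : x ∈ K := by
  simpa only [ops.mul_inv_mul_cancel hyx] using hK.2.1 _ h _ hy

end IsFullSubcryptogroup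

theorem stmt17_general {S : Type*} [Semigroup S] [TopologicalSpace S] [ContinuousMul S]
    (ops : CryptoOps S)
    (hinv : Continuous ops.inv) (hopen : ∀ x : S, IsOpen (HClass x))
    (K : Set S) (hK : IsFullSubcryptogroup ops K) (hKopen : IsOpen K) :
    IsClosed K := by
  refine isOpen_compl_iff.mp (isOpen_iff_forall_mem_open.mpr fun x hx => ?_)
  refine ⟨HClass x ∩ {y | x * ops.inv y ∈ K}, ?_, ?_, ⟨rfl, rfl⟩, hK.mul_inv_self_mem x⟩
  · rintro y ⟨hyx, hxy⟩ hy
    exact hx (hK.mem_of_mul_inv_mem hyx hy hxy)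
  · exact (hopen x).inter (hKopen.preimage (continuous_const.mul hinv))

/-- An open full subcryptogroup of a band of topological groups is closed. -/
theorem stmt17 {S : Type*} [Semigroup S] [TopologicalSpace S] [ContinuousMul S]
    (ops : CryptoOps S) (hcrypt : IsCryptogroup S)
    (hinv : Continuous ops.inv) (hopen : ∀ x : S, IsOpen (HClass x))
    (K : Set S) (hK : IsFullSubcryptogroup ops K) (hKopen : IsOpen K) :
    IsClosed K :=
  stmt17_general ops hinv hopen K hK hKopen
end
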